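/- Fix t > 0 and let 0 < x₁ < x₂. For any two points x < x′ in [x₁,x₂] the inequalities (x − x′)·m(x′,t) ≤ μ(x′,t) − μ(x,t) ≤ (x − x′)·m(x,t) hold, and consequently ∫_{x₁}^{x₂} m(x,t) dx = μ(x₁,t) − μ(x₂,t). -/

import Mathlib

open MeasureTheory Set Filter

noncomputable def Fpot (ρ0 u0 : ℝ → ℝ) (y x t : ℝ) : ℝ :=
  ∫ η in (0:ℝ)..y, (t * u0 η + η - x) * ρ0 η

noncomputable def Gpot (ρb ub : ℝ → ℝ) (τ x t : ℝ) : ℝ :=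
  ∫ η in (0:ℝ)..τ, (x - ub η * (t - η)) * (ρb η * ub η)

/-- `a` minimizes `f` over `[0, ∞)`. -/
def MinimizesOn (f : ℝ → ℝ) (a : ℝ) : Prop :=
  0 ≤ a ∧ ∀ b, 0 ≤ b → f a ≤ f b

/-- `a` is the smallest minimizer of `f` over `[0, ∞)`. -/
def SmallestMinimizer (f : ℝ → ℝ) (a : ℝ) : Prop :=
  MinimizesOn f a ∧ ∀ b, MinimizesOn f b → a ≤ b

/-- `a` is the largest minimizer of `f` over `[0, ∞)`. -/
def LargestMinimizer (f : ℝ → ℝ) (a : ℝ) : Prop :=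
  MinimizesOn f a ∧ ∀ b, MinimizesOn f b → b ≤ a

/-- `v` is the (attained) minimum value of `f` over `[0, ∞)`. -/
def IsMinValue (f : ℝ → ℝ) (v : ℝ) : Prop :=
  (∃ a, 0 ≤ a ∧ f a = v) ∧ ∀ b, 0 ≤ b → v ≤ f b

open Classical in
/-- The mass potential `m(x, t)`. -/
noncomputable def mpot (ρ0 ρb ub : ℝ → ℝ) (Fm Gm ys τs : ℝ → ℝ → ℝ) (x t : ℝ) : ℝ :=
  if Fm x t ≤ Gm x t ∧ 0 < x then ∫ η in (0:ℝ)..ys x t, ρ0 η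
  else - ∫ η in (0:ℝ)..τs x t, ρb η * ub η

open Classical in
/-- The momentum potential `q(x, t)`. -/
noncomputable def qpot (ρ0 u0 ρb ub : ℝ → ℝ) (Fm Gm ys τs : ℝ → ℝ → ℝ) (x t : ℝ) : ℝ :=
  if Fm x t ≤ Gm x t then ∫ η in (0:ℝ)..ys x t, ρ0 η * u0 η
  else - ∫ η in (0:ℝ)..τs x t, ρb η * ub η ^ 2

/-- `μ(x,t) = min (F(x,t), G(x,t))`. -/
noncomputable def μpot (Fm Gm : ℝ → ℝ → ℝ) (x t : ℝ) : ℝ := min (Fm x t) (Gm x t)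

/-!
For fixed `y` the initial potential `x ↦ F(y,x,t)` is affine with slope `-∫₀^y ρ₀`, and for fixed
`τ` the boundary potential `x ↦ G(τ,x,t)` is affine with slope `∫₀^τ ρ_b u_b`. Hence `μ(·,t)` is a
minimum of affine functions, and at `x > 0` the slope of the branch realising the minimum, which is
`-m(x,t)`, is a supergradient of it; using this at `x` and at `x'` gives the two-sided bound.
That bound makes `m(·,t)` monotone and `μ(·,t)` Lipschitz with derivative `-m(·,t)` at every
continuity point of `m(·,t)`, that is, off a countable set, so the integral identity is the
fundamental theorem of calculus.
-/
open Topology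

lemma intervalIntegrable_of_abs_le {f : ℝ → ℝ} {a b C : ℝ} (hf : Measurable f)
    (hC : ∀ η ∈ uIcc a b, |f η| ≤ C) : IntervalIntegrable f volume a b := by
  rw [intervalIntegrable_iff]
  refine Measure.integrableOn_of_bounded (M := C) measure_Ioc_lt_top.ne hf.aestronglyMeasurable ?_
  filter_upwards [ae_restrict_mem measurableSet_uIoc] with η hη
  exact hC η (uIoc_subset_uIcc hη)

lemma IntervalIntegrable.bdd_mul {f g : ℝ → ℝ} {a b C : ℝ} (hg : IntervalIntegrable g volume a b)
    (hf : Measurable f) (hC : ∀ η ∈ uIcc a b, |f η| ≤ C) :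
    IntervalIntegrable (fun η => f η * g η) volume a b := by
  rw [intervalIntegrable_iff] at hg ⊢
  refine hg.bdd_mul (c := C) hf.aestronglyMeasurable ?_
  filter_upwards [ae_restrict_mem measurableSet_uIoc] with η hη
  exact hC η (uIoc_subset_uIcc hη)

def SlopesBracketedBy (f g : ℝ → ℝ) (s : Set ℝ) : Prop :=
  ∀ x ∈ s, ∀ y ∈ s, x < y → g x * (y - x) ≤ f y - f x ∧ f y - f x ≤ g y * (y - x)

section SlopeBounds

variable {f g : ℝ → ℝ} {s : Set ℝ}

lemma SlopesBracketedBy.slope_mem_Icc (h : SlopesBracketedBy f g s) {x y : ℝ} (hx : x ∈ s)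
    (hy : y ∈ s) (hxy : x < y) : slope f x y ∈ Icc (g x) (g y) := by
  obtain ⟨h₁, h₂⟩ := h x hx y hy hxy
  rw [slope_def_field, mem_Icc, le_div_iff₀ (sub_pos.2 hxy), div_le_iff₀ (sub_pos.2 hxy)]
  exact ⟨h₁, h₂⟩

lemma SlopesBracketedBy.monotoneOn (h : SlopesBracketedBy f g s) : MonotoneOn g s := by
  intro x hx y hy hxy
  rcases hxy.eq_or_lt with rfl | hlt
  · rfl
  obtain ⟨h₁, h₂⟩ := h.slope_mem_Icc hx hy hlt
  exact h₁.trans h₂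

lemma SlopesBracketedBy.abs_slope_sub_le (h : SlopesBracketedBy f g s) {x y : ℝ} (hx : x ∈ s)
    (hy : y ∈ s) (hne : y ≠ x) : |slope f x y - g x| ≤ |g y - g x| := by
  have := neg_abs_le (g y - g x)
  have := le_abs_self (g y - g x)
  rcases hne.lt_or_gt with hlt | hlt
  · obtain ⟨h₁, h₂⟩ := slope_comm f x y ▸ h.slope_mem_Icc hy hx hlt
    rw [abs_le]; constructor <;> linarith
  · obtain ⟨h₁, h₂⟩ := h.slope_mem_Icc hx hy hlt
    rw [abs_le]; constructor <;> linarith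

lemma SlopesBracketedBy.hasDerivAt (h : SlopesBracketedBy f g s) {x : ℝ} (hs : s ∈ 𝓝 x)
    (hg : ContinuousAt g x) : HasDerivAt f (g x) x := by
  rw [hasDerivAt_iff_tendsto_slope, tendsto_iff_norm_sub_tendsto_zero]
  have hg₀ : Tendsto (fun y => ‖g y - g x‖) (𝓝[≠] x) (𝓝 0) :=
    (tendsto_iff_norm_sub_tendsto_zero.1 hg.tendsto).mono_left nhdsWithin_le_nhds
  refine squeeze_zero' (Eventually.of_forall fun _ => norm_nonneg _) ?_ hg₀
  filter_upwards [self_mem_nhdsWithin, mem_nhdsWithin_of_mem_nhds hs] with y hne hy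
  exact h.abs_slope_sub_le (mem_of_mem_nhds hs) hy hne

lemma SlopesBracketedBy.abs_sub_le {a b : ℝ} (h : SlopesBracketedBy f g (Icc a b)) {x y : ℝ}
    (hx : x ∈ Icc a b) (hy : y ∈ Icc a b) :
    |f y - f x| ≤ (|g a| + |g b|) * |y - x| := by
  wlog hxy : x < y generalizing x y
  · rcases (not_lt.1 hxy).eq_or_lt with rfl | hlt
    · simp
    · rw [abs_sub_comm (f y), abs_sub_comm y]
      exact this hy hx hlt
  have hmono := h.monotoneOn
  have hga : g a ≤ g x := hmono (left_mem_Icc.2 (hx.1.trans hx.2)) hx hx.1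
  have hgb : g y ≤ g b := hmono hy (right_mem_Icc.2 (hy.1.trans hy.2)) hy.2
  obtain ⟨h₁, h₂⟩ := h x hx y hy hxy
  have hyx : 0 < y - x := sub_pos.2 hxy
  rw [abs_of_pos hyx, abs_le]
  constructor
  · nlinarith [neg_abs_le (g a), abs_nonneg (g b)]
  · nlinarith [le_abs_self (g b), abs_nonneg (g a)]

theorem SlopesBracketedBy.integral_eq_sub {a b : ℝ} (h : SlopesBracketedBy f g (Icc a b))
    (hab : a ≤ b) : ∫ x in a..b, g x = f b - f a := by
  have hmono := h.monotoneOn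
  have hcont : ContinuousOn f (Icc a b) :=
    (LipschitzOnWith.of_dist_le' fun x hx y hy => by
      simpa only [Real.dist_eq] using h.abs_sub_le hy hx).continuousOn
  refine integral_eq_of_hasDerivAt_off_countable_of_le f g hab
    hmono.countable_not_continuousWithinAt hcont ?_ ?_
  · rintro x ⟨hx, hxc⟩
    have hIcc : Icc a b ∈ 𝓝 x := Icc_mem_nhds hx.1 hx.2
    have hgx : ContinuousWithinAt g (Icc a b) x := by
      by_contra hc
      exact hxc ⟨Ioo_subset_Icc_self hx, hc⟩
    exact h.hasDerivAt hIcc (hgx.continuousAt hIcc)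
  · exact (uIcc_of_le hab ▸ hmono).intervalIntegrable

end SlopeBounds

lemma IsMinValue.eq_of_minimizesOn {f : ℝ → ℝ} {v a : ℝ} (hv : IsMinValue f v)
    (ha : MinimizesOn f a) : f a = v := by
  obtain ⟨⟨b, hb, rfl⟩, hv⟩ := hv
  exact le_antisymm (ha.2 b hb) (hv a ha.1)

lemma Fpot_eq_add_mul {ρ0 u0 : ℝ → ℝ} {y x t : ℝ} (hρ0 : IntervalIntegrable ρ0 volume 0 y)
    (hF : IntervalIntegrable (fun η => (t * u0 η + η - x) * ρ0 η) volume 0 y) (x' : ℝ) :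
    Fpot ρ0 u0 y x' t = Fpot ρ0 u0 y x t + (x - x') * ∫ η in (0:ℝ)..y, ρ0 η := by
  rw [Fpot, Fpot, ← intervalIntegral.integral_const_mul,
    ← intervalIntegral.integral_add hF (hρ0.const_mul _)]
  congr 1 with η
  ring

lemma Gpot_eq_add_mul {ρb ub : ℝ → ℝ} {τ x t : ℝ}
    (hρb : IntervalIntegrable (fun η => ρb η * ub η) volume 0 τ)
    (hG : IntervalIntegrable (fun η => (x - ub η * (t - η)) * (ρb η * ub η)) volume 0 τ)
    (x' : ℝ) :
    Gpot ρb ub τ x' t = Gpot ρb ub τ x t + (x' - x) * ∫ η in (0:ℝ)..τ, ρb η * ub η := by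
  rw [Gpot, Gpot, ← intervalIntegral.integral_const_mul,
    ← intervalIntegral.integral_add hG (hρb.const_mul _)]
  congr 1 with η
  ring

lemma Fpot_eq_add_mul_of_bounded {ρ0 u0 : ℝ → ℝ} (hρ0meas : Measurable ρ0)
    (hu0meas : Measurable u0) (hρ0pos : ∀ η, 0 ≤ η → 0 < ρ0 η)
    (hρ0loc : ∀ K : ℝ, ∃ M : ℝ, ∀ η ∈ Set.Icc (0:ℝ) K, ρ0 η ≤ M)
    (hu0bdd : ∃ M : ℝ, ∀ η, 0 ≤ η → |u0 η| ≤ M) {y : ℝ} (hy : 0 ≤ y) (x x' t : ℝ) :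
    Fpot ρ0 u0 y x' t = Fpot ρ0 u0 y x t + (x - x') * ∫ η in (0:ℝ)..y, ρ0 η := by
  obtain ⟨M, hM⟩ := hρ0loc y
  obtain ⟨Mu, hMu⟩ := hu0bdd
  have hρ0 : IntervalIntegrable ρ0 volume 0 y :=
    intervalIntegrable_of_abs_le hρ0meas fun η hη => by
      rw [uIcc_of_le hy] at hη
      rw [abs_of_pos (hρ0pos η hη.1)]
      exact hM η hη
  refine Fpot_eq_add_mul hρ0 (hρ0.bdd_mul (C := |t| * Mu + y + |x|) (by fun_prop) ?_) x'
  intro η hη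
  rw [uIcc_of_le hy] at hη
  calc |t * u0 η + η - x| ≤ |t * u0 η| + |η| + |x| := by
        simpa only [sub_eq_add_neg, abs_neg] using abs_add_three (t * u0 η) η (-x)
    _ ≤ |t| * Mu + y + |x| := by
        rw [abs_mul, abs_of_nonneg hη.1]
        gcongr
        exacts [hMu η hη.1, hη.2]

lemma Gpot_eq_add_mul_of_bounded {ρb ub : ℝ → ℝ} (hρbmeas : Measurable ρb)
    (hubmeas : Measurable ub) (hρbpos : ∀ η, 0 ≤ η → 0 < ρb η)
    (hρbloc : ∀ K : ℝ, ∃ M : ℝ, ∀ η ∈ Set.Icc (0:ℝ) K, ρb η ≤ M)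
    (hubbdd : ∃ M : ℝ, ∀ η, 0 ≤ η → |ub η| ≤ M) {τ : ℝ} (hτ : 0 ≤ τ) (x x' t : ℝ) :
    Gpot ρb ub τ x' t = Gpot ρb ub τ x t + (x' - x) * ∫ η in (0:ℝ)..τ, ρb η * ub η := by
  obtain ⟨M, hM⟩ := hρbloc τ
  obtain ⟨Mu, hMu⟩ := hubbdd
  have hub : IntervalIntegrable ub volume 0 τ :=
    intervalIntegrable_of_abs_le hubmeas fun η hη => by
      rw [uIcc_of_le hτ] at hη
      exact hMu η hη.1
  have hρbub : IntervalIntegrable (fun η => ρb η * ub η) volume 0 τ :=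
    hub.bdd_mul hρbmeas fun η hη => by
      rw [uIcc_of_le hτ] at hη
      rw [abs_of_pos (hρbpos η hη.1)]
      exact hM η hη
  refine Gpot_eq_add_mul hρbub (hρbub.bdd_mul (C := |x| + Mu * (|t| + τ)) (by fun_prop) ?_) x'
  intro η hη
  rw [uIcc_of_le hτ] at hη
  have hMu₀ : 0 ≤ Mu := (abs_nonneg _).trans (hMu 0 le_rfl)
  have htη : |t - η| ≤ |t| + τ := (abs_sub t η).trans (by rw [abs_of_nonneg hη.1]; linarith [hη.2])
  calc |x - ub η * (t - η)| ≤ |x| + |ub η| * |t - η| := by rw [← abs_mul]; exact abs_sub _ _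
    _ ≤ |x| + Mu * (|t| + τ) := by gcongr; exact hMu η hη.1

lemma μpot_le_add_mul_mpot {ρ0 u0 ρb ub : ℝ → ℝ} {Fm Gm ys τs : ℝ → ℝ → ℝ} {x x' t : ℝ}
    (hFaff : ∀ y, 0 ≤ y →
      Fpot ρ0 u0 y x' t = Fpot ρ0 u0 y x t + (x - x') * ∫ η in (0:ℝ)..y, ρ0 η)
    (hGaff : ∀ τ, 0 ≤ τ →
      Gpot ρb ub τ x' t = Gpot ρb ub τ x t + (x' - x) * ∫ η in (0:ℝ)..τ, ρb η * ub η)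
    (hFx : IsMinValue (fun y => Fpot ρ0 u0 y x t) (Fm x t))
    (hFx' : IsMinValue (fun y => Fpot ρ0 u0 y x' t) (Fm x' t))
    (hGx : IsMinValue (fun τ => Gpot ρb ub τ x t) (Gm x t))
    (hGx' : IsMinValue (fun τ => Gpot ρb ub τ x' t) (Gm x' t))
    (hys : MinimizesOn (fun y => Fpot ρ0 u0 y x t) (ys x t))
    (hτs : MinimizesOn (fun τ => Gpot ρb ub τ x t) (τs x t)) (hx : 0 < x) :
    μpot Fm Gm x' t ≤ μpot Fm Gm x t + (x - x') * mpot ρ0 ρb ub Fm Gm ys τs x t := by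
  by_cases hFG : Fm x t ≤ Gm x t
  · have hμ : μpot Fm Gm x t = Fm x t := min_eq_left hFG
    calc μpot Fm Gm x' t ≤ Fpot ρ0 u0 (ys x t) x' t := (min_le_left _ _).trans (hFx'.2 _ hys.1)
      _ = μpot Fm Gm x t + (x - x') * mpot ρ0 ρb ub Fm Gm ys τs x t := by
        rw [hFaff _ hys.1, hFx.eq_of_minimizesOn hys, hμ, mpot, if_pos ⟨hFG, hx⟩]
  · have hμ : μpot Fm Gm x t = Gm x t := min_eq_right (le_of_not_ge hFG)
    calc μpot Fm Gm x' t ≤ Gpot ρb ub (τs x t) x' t := (min_le_right _ _).trans (hGx'.2 _ hτs.1)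
      _ = μpot Fm Gm x t + (x - x') * mpot ρ0 ρb ub Fm Gm ys τs x t := by
        rw [hGaff _ hτs.1, hGx.eq_of_minimizesOn hτs, hμ, mpot, if_neg fun h => hFG h.1]
        ring

theorem stmt14_general
    (ρ0 u0 ρb ub : ℝ → ℝ)
    (hρ0meas : Measurable ρ0) (hu0meas : Measurable u0)
    (hρbmeas : Measurable ρb) (hubmeas : Measurable ub)
    (hρ0pos : ∀ η, 0 ≤ η → 0 < ρ0 η)
    (hρbpos : ∀ η, 0 ≤ η → 0 < ρb η)
    (hρ0loc : ∀ K : ℝ, ∃ M : ℝ, ∀ η ∈ Set.Icc (0:ℝ) K, ρ0 η ≤ M)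
    (hρbloc : ∀ K : ℝ, ∃ M : ℝ, ∀ η ∈ Set.Icc (0:ℝ) K, ρb η ≤ M)
    (hu0bdd : ∃ M : ℝ, ∀ η, 0 ≤ η → |u0 η| ≤ M)
    (hubbdd : ∃ M : ℝ, ∀ η, 0 ≤ η → |ub η| ≤ M)
    (Fm Gm : ℝ → ℝ → ℝ)
    (hFm : ∀ x t, 0 ≤ x → 0 ≤ t → IsMinValue (fun y => Fpot ρ0 u0 y x t) (Fm x t))
    (hGm : ∀ x t, 0 ≤ x → 0 ≤ t → IsMinValue (fun τ => Gpot ρb ub τ x t) (Gm x t))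
    (ys τs : ℝ → ℝ → ℝ)
    (hys : ∀ x t, 0 ≤ x → 0 ≤ t → SmallestMinimizer (fun y => Fpot ρ0 u0 y x t) (ys x t))
    (hτs : ∀ x t, 0 ≤ x → 0 ≤ t → SmallestMinimizer (fun τ => Gpot ρb ub τ x t) (τs x t))
    (t x₁ x₂ : ℝ) (ht : 0 < t) (hx₁ : 0 < x₁) (hx : x₁ < x₂) :
    (∀ x x', x₁ ≤ x → x < x' → x' ≤ x₂ →
      (x - x') * mpot ρ0 ρb ub Fm Gm ys τs x' t ≤
        μpot Fm Gm x' t - μpot Fm Gm x t ∧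
      μpot Fm Gm x' t - μpot Fm Gm x t ≤
        (x - x') * mpot ρ0 ρb ub Fm Gm ys τs x t) ∧
    (∫ x in x₁..x₂, mpot ρ0 ρb ub Fm Gm ys τs x t) =
      μpot Fm Gm x₁ t - μpot Fm Gm x₂ t := by
  have hsuper : ∀ x x', 0 < x → 0 < x' →
      μpot Fm Gm x' t ≤ μpot Fm Gm x t + (x - x') * mpot ρ0 ρb ub Fm Gm ys τs x t :=
    fun x x' hx hx' => μpot_le_add_mul_mpot
      (fun _ hy => Fpot_eq_add_mul_of_bounded hρ0meas hu0meas hρ0pos hρ0loc hu0bdd hy x x' t)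
      (fun _ hτ => Gpot_eq_add_mul_of_bounded hρbmeas hubmeas hρbpos hρbloc hubbdd hτ x x' t)
      (hFm x t hx.le ht.le) (hFm x' t hx'.le ht.le) (hGm x t hx.le ht.le) (hGm x' t hx'.le ht.le)
      (hys x t hx.le ht.le).1 (hτs x t hx.le ht.le).1 hx
  have hsandwich : ∀ x x', x₁ ≤ x → x < x' → x' ≤ x₂ →
      (x - x') * mpot ρ0 ρb ub Fm Gm ys τs x' t ≤ μpot Fm Gm x' t - μpot Fm Gm x t ∧
      μpot Fm Gm x' t - μpot Fm Gm x t ≤ (x - x') * mpot ρ0 ρb ub Fm Gm ys τs x t := by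
    intro x x' h₁ hxx' _
    have hx : 0 < x := hx₁.trans_le h₁
    have hx' : 0 < x' := hx.trans hxx'
    constructor <;> linarith [hsuper x x' hx hx', hsuper x' x hx' hx]
  refine ⟨hsandwich, ?_⟩
  rw [SlopesBracketedBy.integral_eq_sub (f := fun x => -μpot Fm Gm x t)
    (fun x hx x' hx' hxx' => ?_) hx.le]
  · ring
  obtain ⟨h₁, h₂⟩ := hsandwich x x' hx.1 hxx' hx'.2
  constructor <;> linarith

theorem stmt14
    (ρ0 u0 ρb ub : ℝ → ℝ)
    (hρ0meas : Measurable ρ0) (hu0meas : Measurable u0)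
    (hρbmeas : Measurable ρb) (hubmeas : Measurable ub)
    (hρ0pos : ∀ η, 0 ≤ η → 0 < ρ0 η)
    (hρbpos : ∀ η, 0 ≤ η → 0 < ρb η)
    (hubpos : ∀ η, 0 ≤ η → 0 < ub η)
    (hρ0loc : ∀ K : ℝ, ∃ M : ℝ, ∀ η ∈ Set.Icc (0:ℝ) K, ρ0 η ≤ M)
    (hρbloc : ∀ K : ℝ, ∃ M : ℝ, ∀ η ∈ Set.Icc (0:ℝ) K, ρb η ≤ M)
    (hu0bdd : ∃ M : ℝ, ∀ η, 0 ≤ η → |u0 η| ≤ M)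
    (hubbdd : ∃ M : ℝ, ∀ η, 0 ≤ η → |ub η| ≤ M)
    (Fm Gm : ℝ → ℝ → ℝ)
    (hFm : ∀ x t, 0 ≤ x → 0 ≤ t → IsMinValue (fun y => Fpot ρ0 u0 y x t) (Fm x t))
    (hGm : ∀ x t, 0 ≤ x → 0 ≤ t → IsMinValue (fun τ => Gpot ρb ub τ x t) (Gm x t))
    (ys yS τs τS : ℝ → ℝ → ℝ)
    (hys : ∀ x t, 0 ≤ x → 0 ≤ t → SmallestMinimizer (fun y => Fpot ρ0 u0 y x t) (ys x t))
    (hyS : ∀ x t, 0 ≤ x → 0 ≤ t → LargestMinimizer (fun y => Fpot ρ0 u0 y x t) (yS x t))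
    (hτs : ∀ x t, 0 ≤ x → 0 ≤ t → SmallestMinimizer (fun τ => Gpot ρb ub τ x t) (τs x t))
    (hτS : ∀ x t, 0 ≤ x → 0 ≤ t → LargestMinimizer (fun τ => Gpot ρb ub τ x t) (τS x t))
    (t x₁ x₂ : ℝ) (ht : 0 < t) (hx₁ : 0 < x₁) (hx : x₁ < x₂) :
    (∀ x x', x₁ ≤ x → x < x' → x' ≤ x₂ →
      (x - x') * mpot ρ0 ρb ub Fm Gm ys τs x' t ≤
        μpot Fm Gm x' t - μpot Fm Gm x t ∧
      μpot Fm Gm x' t - μpot Fm Gm x t ≤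
        (x - x') * mpot ρ0 ρb ub Fm Gm ys τs x t) ∧
    (∫ x in x₁..x₂, mpot ρ0 ρb ub Fm Gm ys τs x t) =
      μpot Fm Gm x₁ t - μpot Fm Gm x₂ t :=
  stmt14_general ρ0 u0 ρb ub hρ0meas hu0meas hρbmeas hubmeas hρ0pos hρbpos hρ0loc hρbloc hu0bdd
    hubbdd Fm Gm hFm hGm ys τs hys hτs t x₁ x₂ ht hx₁ hx
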